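/- The subshift S generated by the words w_n contains no periodic points: there is no x ∈ S and p ≥ 1 with σ^p(x) = x. -/

import Mathlib

/-!
Position `t` (counted from 1) of every `w n` carries a letter determined by the 2-adic valuation
of `t`: `a` if `t` is odd and `α_v` if `v = v₂(t) ≥ 1`. Hence every window of a point of `S` is a
window of this ruler sequence. If `p` were a period, a long enough window contains a position `T`
with `v₂(T) = v₂(p) + 1`; then `v₂(T + p) = v₂(p)`, and since consecutive letters `α_v`, `α_{v+1}`
differ (and differ from `a`), the letters at `T` and `T + p` differ.
-/

inductive GLetter | a | B | C | D
deriving DecidableEq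

def alphaN (n : ℕ) : GLetter :=
  if n % 3 = 0 then GLetter.B else if n % 3 = 1 then GLetter.D else GLetter.C

def w : ℕ → List GLetter
  | 0 => []
  | 1 => [GLetter.a]
  | (n+2) => w (n+1) ++ [alphaN (n+1)] ++ w (n+1)

def inLanguage (u : List GLetter) : Prop := ∃ n : ℕ, 1 ≤ n ∧ u <:+: w n

/-- The finite subword of `x` of length `m` starting at position `i`. -/
def extract (x : ℤ → GLetter) (i : ℤ) (m : ℕ) : List GLetter :=
  List.ofFn (fun j : Fin m => x (i + (j.val : ℤ)))

/-- The subshift `S` generated by the words `w n`. -/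
def Subs : Set (ℤ → GLetter) := {x | ∀ (i : ℤ) (m : ℕ), inLanguage (extract x i m)}
theorem padicValNat_add_of_lt {p s t : ℕ} [Fact p.Prime] (hs : s ≠ 0) (ht : t ≠ 0)
    (h : padicValNat p s < padicValNat p t) : padicValNat p (s + t) = padicValNat p s := by
  have hst : s + t ≠ 0 := by omega
  refine le_antisymm ?_ ((padicValNat_dvd_iff_le hst).1 ?_)
  · by_contra! hlt
    have hdvd_st : p ^ (padicValNat p s + 1) ∣ s + t := (padicValNat_dvd_iff_le hst).2 hlt
    have hdvd_t : p ^ (padicValNat p s + 1) ∣ t := (padicValNat_dvd_iff_le ht).2 h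
    have := (padicValNat_dvd_iff_le hs).1 ((Nat.dvd_add_left hdvd_t).1 hdvd_st)
    omega
  · exact dvd_add pow_padicValNat_dvd ((pow_dvd_pow p h.le).trans pow_padicValNat_dvd)

theorem padicValNat_lt_of_lt_pow {p s m : ℕ} [Fact p.Prime] (hs : s ≠ 0) (hsm : s < p ^ m) :
    padicValNat p s < m := by
  by_contra! hle
  exact (Nat.le_of_dvd (Nat.pos_of_ne_zero hs) ((padicValNat_dvd_iff_le hs).2 hle)).not_gt hsm

theorem padicValNat_two_pow_mul_odd (k q : ℕ) : padicValNat 2 (2 ^ k * (2 * q + 1)) = k := by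
  rw [padicValNat.mul (by positivity) (by omega), padicValNat.prime_pow,
    padicValNat.eq_zero_of_not_dvd (by omega), add_zero]

theorem exists_padicValNat_two_eq_of_le (N k : ℕ) :
    ∃ T, N ≤ T ∧ T < N + 2 ^ (k + 2) ∧ padicValNat 2 T = k := by
  obtain ⟨d, r, hr, rfl⟩ : ∃ d r, r < 2 ^ (k + 1) ∧ N = 2 ^ (k + 1) * d + r :=
    ⟨N / 2 ^ (k + 1), N % 2 ^ (k + 1), Nat.mod_lt _ (by positivity), (Nat.div_add_mod _ _).symm⟩
  refine ⟨2 ^ k * (2 * (d + 1) + 1), ?_, ?_, padicValNat_two_pow_mul_odd _ _⟩ <;>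
    simp only [pow_succ] at * <;> linarith

def rulerLetter : ℕ → GLetter
  | 0 => .a
  | k + 1 => alphaN (k + 1)

def ruler (t : ℕ) : GLetter := rulerLetter (padicValNat 2 t)

theorem rulerLetter_succ_ne (k : ℕ) : rulerLetter (k + 1) ≠ rulerLetter k := by
  cases k with
  | zero => simp [rulerLetter, alphaN]
  | succ k =>
    simp only [rulerLetter, alphaN]
    split_ifs <;> simp_all <;> omega

theorem w_succ (m : ℕ) : w (m + 1) = w m ++ [rulerLetter m] ++ w m := by
  cases m <;> rfl

theorem length_w (m : ℕ) : (w m).length = 2 ^ m - 1 := by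
  induction m with
  | zero => rfl
  | succ m ih =>
    have := Nat.one_le_two_pow (n := m)
    rw [w_succ, List.length_append, List.length_append, List.length_singleton, ih, pow_succ]
    omega

theorem ruler_two_pow (m : ℕ) : ruler (2 ^ m) = rulerLetter m := by
  rw [ruler, padicValNat.prime_pow]

theorem ruler_add_two_pow {s m : ℕ} (hs : s ≠ 0) (hsm : s < 2 ^ m) :
    ruler (s + 2 ^ m) = ruler s := by
  rw [ruler, ruler, padicValNat_add_of_lt hs (by positivity)
    (by rw [padicValNat.prime_pow]; exact padicValNat_lt_of_lt_pow hs hsm)]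

theorem getElem_w (m k : ℕ) (hk : k < (w m).length) : (w m)[k] = ruler (k + 1) := by
  induction m generalizing k with
  | zero => simp [w] at hk
  | succ m ih =>
    have hpos := Nat.one_le_two_pow (n := m)
    have hL : (w m).length = 2 ^ m - 1 := length_w m
    have hL1 : (w m ++ [rulerLetter m]).length = 2 ^ m := by
      rw [List.length_append, List.length_singleton, hL]; omega
    have hk' : k < 2 ^ m * 2 - 1 := pow_succ 2 m ▸ length_w (m + 1) ▸ hk
    rw [List.getElem_of_eq (w_succ m)]
    rcases lt_trichotomy k (w m).length with hlt | rfl | hgt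
    · rw [List.getElem_append_left (by omega), List.getElem_append_left hlt, ih]
    · simp [hL, Nat.sub_add_cancel hpos, ruler_two_pow]
    · rw [List.getElem_append_right (by omega), ih, hL1,
        ← ruler_add_two_pow (m := m) (by omega) (by omega)]
      congr 1
      omega

theorem exists_ruler_window {x : ℤ → GLetter} (hx : x ∈ Subs) (M : ℕ) :
    ∃ i : ℕ, ∀ j < M, x j = ruler (i + j + 1) := by
  obtain ⟨n, -, s, t, hst⟩ := hx 0 M
  refine ⟨s.length, fun j hj => ?_⟩
  have hwindow : (extract x 0 M).length = M := List.length_ofFn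
  have hlen : s.length + j < (w n).length := by
    rw [← hst, List.length_append, List.length_append, hwindow]; omega
  rw [← getElem_w n _ hlen, List.getElem_of_eq hst.symm,
    List.getElem_append_left (by rw [List.length_append, hwindow]; omega),
    List.getElem_append_right (by omega)]
  simp [extract]

theorem ruler_add_ne {p T : ℕ} (hp : p ≠ 0) (hT : padicValNat 2 T = padicValNat 2 p + 1) :
    ruler (T + p) ≠ ruler T := by
  have hT0 : T ≠ 0 := by rintro rfl; simp at hT
  rw [ruler, ruler, add_comm, padicValNat_add_of_lt hp hT0 (by omega), hT]
  exact (rulerLetter_succ_ne _).symm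

theorem stmt6 : ∀ x ∈ Subs, ∀ p : ℕ, 1 ≤ p → ¬ (∀ i : ℤ, x (i + (p : ℤ)) = x i) := by
  intro x hx p hp hper
  obtain ⟨i, hi⟩ := exists_ruler_window hx (2 ^ (padicValNat 2 p + 1 + 2) + p)
  obtain ⟨T, hiT, hTlt, hT⟩ := exists_padicValNat_two_eq_of_le (i + 1) (padicValNat 2 p + 1)
  obtain ⟨j, rfl⟩ : ∃ j, T = i + 1 + j := ⟨T - (i + 1), by omega⟩
  apply ruler_add_ne (by omega) hT
  have hperj : x ((j + p : ℕ) : ℤ) = x (j : ℤ) := by exact_mod_cast hper j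
  rw [hi j (by omega), hi (j + p) (by omega)] at hperj
  convert hperj using 2 <;> ring
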